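/- arXiv:1312.6884 — 7 statements merged into one kernel-verified Lean document; each statement's English description precedes it below -/
import Mathlib

section
/- Let μ be a measure on ℝⁿ supported on a uniformly discrete set Λ (i.e. μ = Σ_{λ∈Λ} μ(λ) δ_λ with inf of distances between distinct points of Λ positive). Then μ is a temperate distribution if and only if there exist positive constants C and N such that |μ(λ)| ≤ C(1 + |λ|^N) for all λ ∈ Λ. -/
/-!
If the atoms grow at most polynomially, `φ ↦ ∑ c(λ) φ(λ)` is bounded by a single Schwartz
seminorm: the balls of radius `d / 2` around the points of `Λ` are disjoint, so
`∑ (1 + |λ|)^(-r)` is dominated by a multiple of `∫ (1 + |x|)^(-r) dx < ∞` for `r > n`.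
Conversely, if `ψ` is a bump with `ψ 0 = 1` supported in the ball of radius `d`, then
`c(λ) = T(ψ(· - λ))`, and a continuous functional grows polynomially along translates because
every Schwartz seminorm of `ψ(· - v)` is `O((1 + |v|)^k)`.
-/

open MeasureTheory Metric SchwartzMap Module Function
open scoped ContDiff

section Arithmetic

variable {a : ℝ}

lemma one_add_rpow_le_two_mul_one_add_rpow (ha : 0 ≤ a) {N : ℝ} (hN : 0 ≤ N) :
    1 + a ^ N ≤ 2 * (1 + a) ^ N := by
  have h₁ : a ^ N ≤ (1 + a) ^ N := Real.rpow_le_rpow ha (by linarith) hN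
  have h₂ : 1 ≤ (1 + a) ^ N := Real.one_le_rpow (by linarith) hN
  linarith

lemma one_add_pow_le_two_pow_mul_one_add_pow (ha : 0 ≤ a) (K : ℕ) :
    (1 + a) ^ K ≤ 2 ^ K * (1 + a ^ K) := by
  calc (1 + a) ^ K ≤ 2 ^ (K - 1) * (1 ^ K + a ^ K) := add_pow_le zero_le_one ha K
    _ ≤ 2 ^ K * (1 + a ^ K) := by
      rw [one_pow]
      gcongr
      exacts [one_le_two, K.sub_le 1]

end Arithmetic

section Summability

lemma pairwise_disjoint_on_ball_of_le_dist {X : Type*} [PseudoMetricSpace X] {Λ : Set X}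
    {d : ℝ}     (hsep : ∀ x ∈ Λ, ∀ y ∈ Λ, x ≠ y → d ≤ dist x y) :
    Pairwise (Disjoint on (fun l : Λ => ball (l : X) (d / 2))) := fun x y hxy =>
  ball_disjoint_ball (by linarith [hsep x x.2 y y.2 (Subtype.coe_ne_coe.2 hxy)])

variable {E : Type*} [NormedAddCommGroup E]

lemma ofReal_mul_addHaar_ball_le_withDensity [MeasurableSpace E] [BorelSpace E]
    (μ : Measure E) [μ.IsAddHaarMeasure] {r : ℝ} (hr : 0 ≤ r) (x : E) (ε : ℝ) :
    ENNReal.ofReal ((1 + ε) ^ (-r) * (1 + ‖x‖) ^ (-r)) * μ (ball 0 ε) ≤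
      μ.withDensity (fun y => ENNReal.ofReal ((1 + ‖y‖) ^ (-r))) (ball x ε) := by
  rw [withDensity_apply _ measurableSet_ball, ← Measure.addHaar_ball_center μ x,
    ← setLIntegral_const]
  refine setLIntegral_mono (by fun_prop) fun y hy => ENNReal.ofReal_le_ofReal ?_
  have hyx : ‖y - x‖ < ε := mem_ball_iff_norm.1 hy
  have hε : 0 ≤ ε := (norm_nonneg _).trans hyx.le
  have hy : 1 + ‖y‖ ≤ (1 + ε) * (1 + ‖x‖) := by
    nlinarith [norm_le_norm_add_norm_sub' y x, norm_nonneg x]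
  rw [← Real.mul_rpow (by positivity) (by positivity)]
  exact Real.rpow_le_rpow_of_nonpos (by positivity) hy (by linarith)

theorem summable_one_add_norm_rpow_neg [NormedSpace ℝ E] [FiniteDimensional ℝ E] {ι : Type*}
    {p : ι → E} {ε r : ℝ} (hε : 0 < ε) (hp : Pairwise (Disjoint on (fun i => ball (p i) ε)))
    (hr : (finrank ℝ E : ℝ) < r) :
    Summable fun i => (1 + ‖p i‖) ^ (-r) := by
  borelize E
  set μ : Measure E := Measure.addHaar
  set ν := μ.withDensity fun y => ENNReal.ofReal ((1 + ‖y‖) ^ (-r))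
  have : IsFiniteMeasure ν := isFiniteMeasure_withDensity (finite_integral_one_add_norm hr).ne
  have hν : Summable fun i => ν.real (ball (p i) ε) :=
    ENNReal.summable_toReal ((tsum_meas_le_meas_iUnion_of_disjoint ν
      (fun _ => measurableSet_ball) hp).trans_lt (measure_lt_top ν _)).ne
  have hr₀ : 0 ≤ r := (Nat.cast_nonneg _).trans hr.le
  set a := (1 + ε) ^ (-r) * μ.real (ball 0 ε)
  have ha : 0 < a := mul_pos (by positivity)
    (ENNReal.toReal_pos (measure_ball_pos μ 0 hε).ne' measure_ball_lt_top.ne)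
  refine (hν.div_const a).of_nonneg_of_le (fun _ => by positivity) fun i => ?_
  rw [le_div_iff₀ ha]
  have := ENNReal.toReal_mono (measure_ne_top ν _)
    (ofReal_mul_addHaar_ball_le_withDensity μ hr₀ (p i) ε)
  rw [ENNReal.toReal_mul, ENNReal.toReal_ofReal (by positivity)] at this
  calc (1 + ‖p i‖) ^ (-r) * a
      = (1 + ε) ^ (-r) * (1 + ‖p i‖) ^ (-r) * μ.real (ball 0 ε) := by ring
    _ ≤ ν.real (ball (p i) ε) := this

end Summability

namespace SchwartzMap

variable {𝕜 E F : Type*} [NormedAddCommGroup E] [NormedSpace ℝ E]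
  [NormedAddCommGroup F] [NormedSpace ℝ F]

section Functionals

variable [NormedField 𝕜] [NormedSpace 𝕜 F] [SMulCommClass ℝ 𝕜 F]

lemma norm_le_one_add_norm_rpow_neg_mul (f : 𝓢(E, F)) (k : ℕ) (x : E) :
    ‖f x‖ ≤ (1 + ‖x‖) ^ (-(k : ℝ)) *
      (2 ^ k * (Finset.Iic (k, 0)).sup (schwartzSeminormFamily 𝕜 E F) f) := by
  rw [Real.rpow_neg (by positivity), ← div_eq_inv_mul, le_div_iff₀' (by positivity),
    Real.rpow_natCast]
  have := one_add_le_sup_seminorm_apply (𝕜 := 𝕜) (m := (k, 0)) le_rfl le_rfl f x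
  rwa [norm_iteratedFDeriv_zero] at this

theorem exists_clm_hasSum_smul_apply [CompleteSpace F] {ι : Type*} (p : ι → E) (a : ι → 𝕜)
    (k : ℕ) (ha : Summable fun i => ‖a i‖ * (1 + ‖p i‖) ^ (-(k : ℝ))) :
    ∃ T : 𝓢(E, F) →L[𝕜] F, ∀ f : 𝓢(E, F), HasSum (fun i => a i • f (p i)) (T f) := by
  set S := fun f : 𝓢(E, F) => (Finset.Iic (k, 0)).sup (schwartzSeminormFamily 𝕜 E F) f
  have hbound : ∀ f i,
      ‖a i • f (p i)‖ ≤ ‖a i‖ * (1 + ‖p i‖) ^ (-(k : ℝ)) * (2 ^ k * S f) := by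
    intro f i
    rw [norm_smul, mul_assoc]
    gcongr
    exact norm_le_one_add_norm_rpow_neg_mul f k (p i)
  have hsum : ∀ f : 𝓢(E, F), Summable fun i => ‖a i • f (p i)‖ := fun f =>
    (ha.mul_right _).of_nonneg_of_le (fun _ => norm_nonneg _) (hbound f)
  refine ⟨mkCLMtoNormedSpace (fun f => ∑' i, a i • f (p i)) (fun f g => ?_) (fun b f => ?_)
    ?_, fun f => (hsum f).of_norm.hasSum⟩
  · simp only [add_apply, smul_add]
    exact (hsum f).of_norm.tsum_add (hsum g).of_norm
  · simp only [smul_apply, smul_comm (a _) b, RingHom.id_apply]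
    exact tsum_const_smul'' b
  · refine ⟨Finset.Iic (k, 0), (∑' i, ‖a i‖ * (1 + ‖p i‖) ^ (-(k : ℝ))) * 2 ^ k,
      by positivity, fun f => ?_⟩
    calc ‖∑' i, a i • f (p i)‖
        ≤ ∑' i, ‖a i • f (p i)‖ := norm_tsum_le_tsum_norm (hsum f)
      _ ≤ ∑' i, ‖a i‖ * (1 + ‖p i‖) ^ (-(k : ℝ)) * (2 ^ k * S f) :=
        (hsum f).tsum_le_tsum (hbound f) (ha.mul_right _)
      _ = _ := by rw [tsum_mul_right]; ring

end Functionals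

section Translation

variable [RCLike 𝕜] [NormedSpace 𝕜 F]

lemma seminorm_compSubConstCLM_le (k n : ℕ) (f : 𝓢(E, F)) (v : E) :
    SchwartzMap.seminorm 𝕜 k n (f.compSubConstCLM 𝕜 v) ≤
      (1 + ‖v‖) ^ k * (2 ^ k * (Finset.Iic (k, n)).sup (schwartzSeminormFamily 𝕜 E F) f) := by
  refine seminorm_le_bound 𝕜 k n _ (by positivity) fun x => ?_
  have hx : ‖x‖ ≤ (1 + ‖v‖) * (1 + ‖x - v‖) := by
    nlinarith [norm_le_norm_add_norm_sub' x v, norm_nonneg v, norm_nonneg (x - v)]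
  calc ‖x‖ ^ k * ‖iteratedFDeriv ℝ n (f.compSubConstCLM 𝕜 v) x‖
      = ‖x‖ ^ k * ‖iteratedFDeriv ℝ n f (x - v)‖ := by
        rw [← iteratedFDeriv_comp_sub]
        rfl
    _ ≤ ((1 + ‖v‖) * (1 + ‖x - v‖)) ^ k * ‖iteratedFDeriv ℝ n f (x - v)‖ := by gcongr
    _ = (1 + ‖v‖) ^ k * ((1 + ‖x - v‖) ^ k * ‖iteratedFDeriv ℝ n f (x - v)‖) := by
      rw [mul_pow]; ring
    _ ≤ _ := mul_le_mul_of_nonneg_left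
      (one_add_le_sup_seminorm_apply (𝕜 := 𝕜) (m := (k, n)) le_rfl le_rfl f (x - v))
      (by positivity)

theorem _root_.ContinuousLinearMap.exists_norm_apply_compSubConstCLM_le {G : Type*}
    [NormedAddCommGroup G] [NormedSpace 𝕜 G] (T : 𝓢(E, F) →L[𝕜] G) (f : 𝓢(E, F)) :
    ∃ C ≥ 0, ∃ K : ℕ, ∀ v : E, ‖T (f.compSubConstCLM 𝕜 v)‖ ≤ C * (1 + ‖v‖) ^ K := by
  obtain ⟨s, C₀, -, hT⟩ := Seminorm.bound_of_continuous (schwartz_withSeminorms 𝕜 E F)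
    ((normSeminorm 𝕜 G).comp T.toLinearMap) (continuous_norm.comp T.continuous)
  set K := s.sup Prod.fst
  set B := ∑ p ∈ s, 2 ^ p.1 * (Finset.Iic p).sup (schwartzSeminormFamily 𝕜 E F) f
  have hB : ∀ p ∈ s, 2 ^ p.1 * (Finset.Iic p).sup (schwartzSeminormFamily 𝕜 E F) f ≤ B :=
    fun p hp => Finset.single_le_sum
      (f := fun q : ℕ × ℕ => 2 ^ q.1 * (Finset.Iic q).sup (schwartzSeminormFamily 𝕜 E F) f)
      (fun q _ => by positivity) hp
  refine ⟨C₀ * B, by positivity, K, fun v => ?_⟩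
  have hsup : s.sup (schwartzSeminormFamily 𝕜 E F) (f.compSubConstCLM 𝕜 v) ≤
      (1 + ‖v‖) ^ K * B := by
    refine Seminorm.finset_sup_apply_le (by positivity) fun p hp => ?_
    calc schwartzSeminormFamily 𝕜 E F p (f.compSubConstCLM 𝕜 v)
        ≤ (1 + ‖v‖) ^ p.1 *
            (2 ^ p.1 * (Finset.Iic p).sup (schwartzSeminormFamily 𝕜 E F) f) :=
          seminorm_compSubConstCLM_le p.1 p.2 f v
      _ ≤ (1 + ‖v‖) ^ K * B := by
        gcongr
        exacts [le_add_of_nonneg_right (norm_nonneg v), Finset.le_sup hp, hB p hp]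
  calc ‖T (f.compSubConstCLM 𝕜 v)‖
      ≤ C₀ * s.sup (schwartzSeminormFamily 𝕜 E F) (f.compSubConstCLM 𝕜 v) := hT _
    _ ≤ C₀ * ((1 + ‖v‖) ^ K * B) := by gcongr
    _ = C₀ * B * (1 + ‖v‖) ^ K := by ring

variable (𝕜 E) in
lemma exists_apply_zero_eq_one_and_eq_zero_of_le_norm [FiniteDimensional ℝ E] {R : ℝ}
    (hR : 0 < R) : ∃ ψ : 𝓢(E, 𝕜), ψ 0 = 1 ∧ ∀ x, R ≤ ‖x‖ → ψ x = 0 := by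
  let b : ContDiffBump (0 : E) := ⟨R / 2, R, half_pos hR, half_lt_self hR⟩
  have hb : HasCompactSupport fun x => (b x : 𝕜) :=
    b.hasCompactSupport.comp_left RCLike.ofReal_zero
  have hs : ContDiff ℝ ∞ fun x => (b x : 𝕜) :=
    (RCLike.ofRealCLM (K := 𝕜)).contDiff.comp b.contDiff
  refine ⟨hb.toSchwartzMap hs, ?_, fun x hx => ?_⟩
  · simp [b.one_of_mem_closedBall (mem_closedBall_self (half_pos hR).le)]
  · simp [b.zero_of_le_dist (x := x) (by simpa using hx)]

end Translation

end SchwartzMap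

section PointMeasure

variable {E : Type*} [NormedAddCommGroup E] [NormedSpace ℝ E] [FiniteDimensional ℝ E]
  {Λ : Set E} {d : ℝ} {c : E → ℂ}

theorem exists_pow_bound_of_hasSum (hd : 0 < d)
    (hsep : ∀ x ∈ Λ, ∀ y ∈ Λ, x ≠ y → d ≤ dist x y) (T : 𝓢(E, ℂ) →L[ℂ] ℂ)
    (hT : ∀ φ : 𝓢(E, ℂ), HasSum (fun l : Λ => c l * φ l) (T φ)) :
    ∃ C N : ℝ, 0 < C ∧ 0 < N ∧ ∀ l ∈ Λ, ‖c l‖ ≤ C * (1 + ‖l‖ ^ N) := by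
  obtain ⟨ψ, hψ0, hψ⟩ := exists_apply_zero_eq_one_and_eq_zero_of_le_norm ℂ E hd
  obtain ⟨C, hC, K, hTψ⟩ := T.exists_norm_apply_compSubConstCLM_le ψ
  have hc : ∀ l ∈ Λ, T (ψ.compSubConstCLM ℂ l) = c l := by
    intro l hl
    refine (hT _).unique ?_
    convert hasSum_single (⟨l, hl⟩ : Λ) fun l' hl' => ?_ using 1
    · simp [hψ0]
    · rw [compSubConstCLM_apply, hψ _ (by
        rw [← dist_eq_norm]; exact hsep _ l'.2 _ hl (Subtype.coe_ne_coe.2 hl')), mul_zero]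
  refine ⟨2 ^ (K + 1) * C + 1, K + 1, by positivity, by positivity, fun l hl => ?_⟩
  rw [← hc l hl, ← Nat.cast_succ, Real.rpow_natCast]
  calc ‖T (ψ.compSubConstCLM ℂ l)‖ ≤ C * (1 + ‖l‖) ^ K := hTψ l
    _ ≤ C * (1 + ‖l‖) ^ (K + 1) := by
      gcongr
      exacts [le_add_of_nonneg_right (norm_nonneg l), K.le_succ]
    _ ≤ C * (2 ^ (K + 1) * (1 + ‖l‖ ^ (K + 1))) := by
      gcongr; exact one_add_pow_le_two_pow_mul_one_add_pow (norm_nonneg l) _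
    _ ≤ (2 ^ (K + 1) * C + 1) * (1 + ‖l‖ ^ (K + 1)) := by
      nlinarith [pow_nonneg (norm_nonneg l) (K + 1)]

theorem exists_clm_hasSum_of_le_mul_one_add_rpow (hd : 0 < d)
    (hsep : ∀ x ∈ Λ, ∀ y ∈ Λ, x ≠ y → d ≤ dist x y) {C N : ℝ} (hC : 0 ≤ C) (hN : 0 ≤ N)
    (hc : ∀ l ∈ Λ, ‖c l‖ ≤ C * (1 + ‖l‖ ^ N)) :
    ∃ T : 𝓢(E, ℂ) →L[ℂ] ℂ, ∀ φ : 𝓢(E, ℂ), HasSum (fun l : Λ => c l * φ l) (T φ) := by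
  set r : ℝ := finrank ℝ E + 1
  set k : ℕ := ⌈N⌉₊ + finrank ℝ E + 1
  have hsum := summable_one_add_norm_rpow_neg (half_pos hd)
    (pairwise_disjoint_on_ball_of_le_dist hsep) (lt_add_one (finrank ℝ E : ℝ))
  refine exists_clm_hasSum_smul_apply (fun l : Λ => (l : E)) (fun l => c l) k
    ((hsum.mul_left (2 * C)).of_nonneg_of_le (fun _ => by positivity) fun l => ?_)
  have hl₁ : 1 ≤ 1 + ‖(l : E)‖ := le_add_of_nonneg_right (norm_nonneg _)
  have hk : N - k ≤ -r := by
    have := Nat.le_ceil N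
    simp only [k, r]
    push_cast
    linarith
  calc ‖c l‖ * (1 + ‖(l : E)‖) ^ (-(k : ℝ))
      ≤ 2 * C * (1 + ‖(l : E)‖) ^ N * (1 + ‖(l : E)‖) ^ (-(k : ℝ)) := by
        gcongr
        calc ‖c l‖ ≤ C * (1 + ‖(l : E)‖ ^ N) := hc l l.2
          _ ≤ C * (2 * (1 + ‖(l : E)‖) ^ N) := by
            gcongr; exact one_add_rpow_le_two_mul_one_add_rpow (norm_nonneg _) hN
          _ = _ := by ring
    _ = 2 * C * (1 + ‖(l : E)‖) ^ (N - k) := by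
        rw [mul_assoc, ← Real.rpow_add (by positivity), sub_eq_add_neg]
    _ ≤ 2 * C * (1 + ‖(l : E)‖) ^ (-r) :=
        mul_le_mul_of_nonneg_left (Real.rpow_le_rpow_of_exponent_le hl₁ hk) (by positivity)

end PointMeasure

theorem stmt0_general (n : ℕ) (Λ : Set (EuclideanSpace ℝ (Fin n)))
    (hΛ : ∃ d > 0, ∀ x ∈ Λ, ∀ y ∈ Λ, x ≠ y → d ≤ dist x y)
    (c : EuclideanSpace ℝ (Fin n) → ℂ) :
    (∃ T : SchwartzMap (EuclideanSpace ℝ (Fin n)) ℂ →L[ℂ] ℂ,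
        ∀ φ : SchwartzMap (EuclideanSpace ℝ (Fin n)) ℂ,
          HasSum (fun l : Λ => c l * φ l) (T φ)) ↔
      (∃ C N : ℝ, 0 < C ∧ 0 < N ∧ ∀ l ∈ Λ, ‖c l‖ ≤ C * (1 + ‖l‖ ^ N)) := by
  obtain ⟨d, hd, hsep⟩ := hΛ
  constructor
  · rintro ⟨T, hT⟩
    exact exists_pow_bound_of_hasSum hd hsep T hT
  · rintro ⟨C, N, hC, hN, hc⟩
    exact exists_clm_hasSum_of_le_mul_one_add_rpow hd hsep hC.le hN.le hc

/-- A pure point measure `μ = ∑_{λ∈Λ} c(λ) δ_λ` on ℝⁿ with uniformly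
discrete support `Λ` is a temperate distribution iff its atoms have polynomial growth. -/
theorem stmt0 (n : ℕ) (Λ : Set (EuclideanSpace ℝ (Fin n)))
    (hΛ : ∃ d > 0, ∀ x ∈ Λ, ∀ y ∈ Λ, x ≠ y → d ≤ dist x y)
    (c : EuclideanSpace ℝ (Fin n) → ℂ)
    (hc : ∀ l ∈ Λ, c l ≠ 0) :
    (∃ T : SchwartzMap (EuclideanSpace ℝ (Fin n)) ℂ →L[ℂ] ℂ,
        ∀ φ : SchwartzMap (EuclideanSpace ℝ (Fin n)) ℂ,
          HasSum (fun l : Λ => c l * φ l) (T φ)) ↔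
      (∃ C N : ℝ, 0 < C ∧ 0 < N ∧ ∀ l ∈ Λ, ‖c l‖ ≤ C * (1 + ‖l‖ ^ N)) :=
  stmt0_general n Λ hΛ c
end

section
/- Let μ be a pure point measure on ℝⁿ supported on a uniformly discrete set Λ which is a temperate distribution, and suppose its Fourier transform μ̂ is also a pure point measure supported on a uniformly discrete set S. Then the atoms of μ are uniformly bounded: sup_{λ∈Λ} |μ(λ)| < ∞. -/
/-!
Let `ψ` be a Schwartz bump with `ψ 0 = 1` supported in the ball of radius `d`, where `d`
separates the points of `Λ`. Testing `μ` against the translate `ψ(· - λ)` isolates the atom: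
`μ(λ) = T(ψ(· - λ))`. Testing `μ̂` against its inverse Fourier transform gives
`μ(λ) = ∑ₛ μ̂(s) 𝓕⁻(ψ(· - λ))(s)`, and a translation only multiplies `𝓕⁻ψ` by a unimodular
phase, so `|μ(λ)| ≤ ∑ₛ |μ̂(s)| |𝓕⁻ψ(s)|`, which is finite (an unconditionally convergent
series in `ℂ` converges absolutely) and independent of `λ`.
-/

open MeasureTheory Metric
open scoped FourierTransform SchwartzMap

theorem SchwartzMap.exists_apply_zero_eq_one_and_eq_zero_of_le_norm_s1 {V : Type*}
    [NormedAddCommGroup V] [InnerProductSpace ℝ V] [FiniteDimensional ℝ V] {r : ℝ} (hr : 0 < r) :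
    ∃ ψ : 𝓢(V, ℂ), ψ 0 = 1 ∧ ∀ x, r ≤ ‖x‖ → ψ x = 0 := by
  let B : ContDiffBump (0 : V) := ⟨r / 2, r, half_pos hr, half_lt_self hr⟩
  have hsupp : HasCompactSupport (fun x ↦ (B x : ℂ)) :=
    B.hasCompactSupport.comp_left Complex.ofReal_zero
  refine ⟨hsupp.toSchwartzMap (Complex.ofRealCLM.contDiff.comp B.contDiff), ?_, fun x hx ↦ ?_⟩
  · change (B 0 : ℂ) = 1
    rw [B.one_of_mem_closedBall (mem_closedBall_self (half_pos hr).le), Complex.ofReal_one]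
  · change (B x : ℂ) = 0
    rw [B.zero_of_le_dist (by rwa [dist_zero_right]), Complex.ofReal_zero]

theorem HasSum.eq_mul_of_forall_ne_eq_zero {X 𝕜 : Type*} [NormedField 𝕜] {Λ : Set X}
    {a φ : X → 𝕜} {t : 𝕜} {l : X} (hl : l ∈ Λ) (h : HasSum (fun m : Λ ↦ a m * φ m) t)
    (hφ : ∀ m ∈ Λ, m ≠ l → φ m = 0) : t = a l * φ l :=
  h.unique <| hasSum_single (f := fun m : Λ ↦ a m * φ m) ⟨l, hl⟩ fun m hm ↦ by
    rw [hφ m m.2 (fun h ↦ hm (Subtype.ext h)), mul_zero]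

theorem apply_compSubConstCLM_eq_of_hasSum {V : Type*} [NormedAddCommGroup V]
    [NormedSpace ℝ V] {Λ : Set V} {a : V → ℂ} {T : 𝓢(V, ℂ) →L[ℂ] ℂ}
    {d : ℝ} (hsep : ∀ x ∈ Λ, ∀ y ∈ Λ, x ≠ y → d ≤ dist x y)
    (hT : ∀ φ : 𝓢(V, ℂ), HasSum (fun l : Λ ↦ a l * φ l) (T φ))
    {ψ : 𝓢(V, ℂ)} (hψ0 : ψ 0 = 1) (hψ : ∀ x, d ≤ ‖x‖ → ψ x = 0) {l : V} (hl : l ∈ Λ) :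
    T (ψ.compSubConstCLM ℂ l) = a l := by
  have h := (hT (ψ.compSubConstCLM ℂ l)).eq_mul_of_forall_ne_eq_zero hl fun m hm hml ↦
    hψ _ ((hsep m hm l hl hml).trans_eq (dist_eq_norm m l))
  rwa [SchwartzMap.compSubConstCLM_apply, sub_self, hψ0, mul_one] at h

variable {V : Type*} [NormedAddCommGroup V] [InnerProductSpace ℝ V] [FiniteDimensional ℝ V]
  [MeasurableSpace V] [BorelSpace V]

theorem Real.norm_fourierInv_comp_sub_const {E : Type*} [NormedAddCommGroup E] [NormedSpace ℂ E]
    (f : V → E) (a w : V) : ‖𝓕⁻ (fun x ↦ f (x - a)) w‖ = ‖𝓕⁻ f w‖ := by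
  have h : (fun x ↦ f (x - a)) = f ∘ fun x ↦ x + -a := by
    simp only [Function.comp_def, sub_eq_add_neg]
  rw [h]
  change ‖VectorFourier.fourierIntegral 𝐞 volume (-innerₗ V) (f ∘ fun x ↦ x + -a) w‖ = _
  rw [VectorFourier.fourierIntegral_comp_add_right]
  exact Circle.norm_smul _ _

theorem SchwartzMap.norm_fourierInv_compSubConstCLM {E : Type*} [NormedAddCommGroup E]
    [NormedSpace ℂ E] (f : 𝓢(V, E)) (a w : V) :
    ‖𝓕⁻ (f.compSubConstCLM ℂ a) w‖ = ‖𝓕⁻ f w‖ := by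
  rw [fourierInv_coe, fourierInv_coe]
  exact Real.norm_fourierInv_comp_sub_const f a w

theorem stmt1_general (n : ℕ) (Λ S : Set (EuclideanSpace ℝ (Fin n)))
    (hΛ : ∃ d > 0, ∀ x ∈ Λ, ∀ y ∈ Λ, x ≠ y → d ≤ dist x y)
    (a b : EuclideanSpace ℝ (Fin n) → ℂ)
    (T : SchwartzMap (EuclideanSpace ℝ (Fin n)) ℂ →L[ℂ] ℂ)
    (hT : ∀ φ : SchwartzMap (EuclideanSpace ℝ (Fin n)) ℂ,
      HasSum (fun l : Λ => a l * φ l) (T φ))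
    (hFT : ∀ φ : SchwartzMap (EuclideanSpace ℝ (Fin n)) ℂ,
      HasSum (fun s : S => b s * φ s) (T (SchwartzMap.fourierTransformCLM ℂ φ))) :
    ∃ C : ℝ, ∀ l ∈ Λ, ‖a l‖ ≤ C := by
  obtain ⟨d, hd, hsep⟩ := hΛ
  obtain ⟨ψ, hψ0, hψ⟩ := SchwartzMap.exists_apply_zero_eq_one_and_eq_zero_of_le_norm_s1
    (V := EuclideanSpace ℝ (Fin n)) hd
  have hFTinv : ∀ φ : 𝓢(EuclideanSpace ℝ (Fin n), ℂ),
      HasSum (fun s : S ↦ b s * 𝓕⁻ φ s) (T φ) := fun φ ↦ by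
    simpa using hFT (𝓕⁻ φ)
  refine ⟨∑' s : S, ‖b s * 𝓕⁻ ψ s‖, fun l hl ↦ ?_⟩
  have hatom := hFTinv (ψ.compSubConstCLM ℂ l)
  rw [apply_compSubConstCLM_eq_of_hasSum hsep hT hψ0 hψ hl] at hatom
  have hnorm : (fun s : S ↦ ‖b s * 𝓕⁻ (ψ.compSubConstCLM ℂ l) s‖) =
      fun s : S ↦ ‖b s * 𝓕⁻ ψ s‖ := by
    simp only [norm_mul, SchwartzMap.norm_fourierInv_compSubConstCLM]
  calc ‖a l‖ = ‖∑' s : S, b s * 𝓕⁻ (ψ.compSubConstCLM ℂ l) s‖ := by rw [hatom.tsum_eq]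
    _ ≤ ∑' s : S, ‖b s * 𝓕⁻ (ψ.compSubConstCLM ℂ l) s‖ :=
      norm_tsum_le_tsum_norm (hnorm ▸ (hFTinv ψ).summable.norm)
    _ = ∑' s : S, ‖b s * 𝓕⁻ ψ s‖ := by rw [hnorm]

/-- If a temperate pure point measure on a uniformly discrete set Λ has a
Fourier transform which is a pure point measure on a uniformly discrete set S, then its
atoms are uniformly bounded. -/
theorem stmt1 (n : ℕ) (Λ S : Set (EuclideanSpace ℝ (Fin n)))
    (hΛ : ∃ d > 0, ∀ x ∈ Λ, ∀ y ∈ Λ, x ≠ y → d ≤ dist x y)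
    (hS : ∃ d > 0, ∀ x ∈ S, ∀ y ∈ S, x ≠ y → d ≤ dist x y)
    (a b : EuclideanSpace ℝ (Fin n) → ℂ)
    (T : SchwartzMap (EuclideanSpace ℝ (Fin n)) ℂ →L[ℂ] ℂ)
    (hT : ∀ φ : SchwartzMap (EuclideanSpace ℝ (Fin n)) ℂ,
      HasSum (fun l : Λ => a l * φ l) (T φ))
    (ha : ∀ l ∈ Λ, a l ≠ 0)
    (hFT : ∀ φ : SchwartzMap (EuclideanSpace ℝ (Fin n)) ℂ,
      HasSum (fun s : S => b s * φ s) (T (SchwartzMap.fourierTransformCLM ℂ φ)))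
    (hb : ∀ s ∈ S, b s ≠ 0) :
    ∃ C : ℝ, ∀ l ∈ Λ, ‖a l‖ ≤ C :=
  stmt1_general n Λ S hΛ a b T hT hFT
end

section
/- Let μ be a non-zero positive measure on ℝⁿ which is a temperate distribution. Then 0 belongs to the support of its Fourier transform μ̂ (i.e. μ̂ does not vanish on any neighborhood of the origin). -/
/-!
Pick ξ₀ in the support of μ. Modulating a small bump `g` by `𝐞 ⟪x, ξ₀⟫` gives a test function
`ψ` supported near 0 whose Fourier transform at ξ₀ is `∫ g > 0`. The autocorrelation
`Φ = ψ ⋆ conj ψ(-·)` is still supported near 0, and `𝓕 Φ = ‖𝓕 ψ‖²` is nonnegative and positive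
near ξ₀, so `∫ 𝓕 Φ dμ > 0`.
-/

open MeasureTheory Metric Set

open scoped FourierTransform RealInnerProductSpace Convolution ComplexConjugate ContDiff Pointwise

theorem MeasureTheory.integral_pos_of_mem_support {X : Type*} [TopologicalSpace X]
    [MeasurableSpace X] {μ : Measure X} {f : X → ℝ} {x : X} (hx : x ∈ μ.support)
    (hf : Continuous f) (hfi : Integrable f μ) (hf0 : 0 ≤ f) (hfx : f x ≠ 0) :
    0 < ∫ y, f y ∂μ :=
  (integral_pos_iff_support_of_nonneg hf0 hfi).2 <|
    (Measure.mem_support_iff_forall x).1 hx _ (hf.isOpen_support.mem_nhds hfx)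

variable {V : Type*} [NormedAddCommGroup V] [InnerProductSpace ℝ V]

theorem Real.contDiff_fourierChar_inner (η : V) : ContDiff ℝ ∞ fun x : V => (𝐞 ⟪x, η⟫ : ℂ) := by
  simp only [Real.fourierChar_apply]
  exact Complex.contDiff_exp.comp <| (Complex.ofRealCLM.contDiff.comp
    (contDiff_const.mul (contDiff_id.inner ℝ contDiff_const))).mul contDiff_const

variable [FiniteDimensional ℝ V] [MeasurableSpace V] [BorelSpace V]

namespace Real

theorem continuous_fourier {E : Type*} [NormedAddCommGroup E] [NormedSpace ℂ E] {f : V → E}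
    (hf : Integrable f) : Continuous (𝓕 f) :=
  VectorFourier.fourierIntegral_continuous continuous_fourierChar (innerSL ℝ).continuous₂ hf

theorem fourier_fourierChar_smul {E : Type*} [NormedAddCommGroup E] [NormedSpace ℂ E]
    (f : V → E) (η ξ : V) : 𝓕 (fun x => 𝐞 ⟪x, η⟫ • f x) ξ = 𝓕 f (ξ - η) := by
  simp only [fourier_eq, smul_smul, ← AddChar.map_add_eq_mul]
  congr 1 with v
  rw [inner_sub_right]
  ring_nf

theorem fourier_conj_neg (f : V → ℂ) (ξ : V) :
    𝓕 (fun x => conj (f (-x))) ξ = conj (𝓕 f ξ) := by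
  rw [fourier_eq, ← integral_neg_eq_self, fourier_eq, ← integral_conj]
  congr 1 with x
  simp only [neg_neg, inner_neg_left, Circle.smul_def, smul_eq_mul, map_mul,
    ← Circle.coe_inv_eq_conj, AddChar.map_neg_eq_inv, inv_inv]

end Real

noncomputable def autocorrelation (f : V → ℂ) : V → ℂ :=
  f ⋆[ContinuousLinearMap.mul ℂ ℂ] fun x => conj (f (-x))

theorem fourier_autocorrelation {f : V → ℂ} (hf : Integrable f) (ξ : V) :
    𝓕 (autocorrelation f) ξ = ((‖𝓕 f ξ‖ ^ 2 : ℝ) : ℂ) := by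
  have hf' : Integrable fun x => conj (f (-x)) :=
    Complex.conjCLE.toContinuousLinearMap.integrable_comp hf.comp_neg
  rw [autocorrelation, Real.fourier_mul_convolution_eq hf hf', Real.fourier_conj_neg,
    Complex.mul_conj', Complex.ofReal_pow]

theorem ContDiff.autocorrelation {f : V → ℂ} {n : ℕ∞} (hf : ContDiff ℝ n f)
    (hcf : HasCompactSupport f) : ContDiff ℝ n (autocorrelation f) := by
  have hf' : ContDiff ℝ n fun x => conj (f (-x)) :=
    Complex.conjCLE.contDiff.comp (hf.comp contDiff_neg)
  have hcf' : HasCompactSupport fun x => conj (f (-x)) :=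
    (hcf.comp_homeomorph (Homeomorph.neg V)).comp_left (map_zero conj)
  exact hcf'.contDiff_convolution_right (ContinuousLinearMap.mul ℝ ℂ)
    hf.continuous.locallyIntegrable hf'

theorem tsupport_autocorrelation_subset {f : V → ℂ} {ε : ℝ} (hε : 0 ≤ ε)
    (hf : Function.support f ⊆ closedBall 0 ε) :
    tsupport (autocorrelation f) ⊆ closedBall 0 (2 * ε) := by
  have hf' : (Function.support fun x => conj (f (-x))) ⊆ closedBall 0 ε := by
    intro x hx
    simpa using hf (show -x ∈ Function.support f by simpa using hx)
  refine closure_minimal ?_ isClosed_closedBall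
  calc Function.support (autocorrelation f)
      ⊆ closedBall 0 ε + closedBall 0 ε :=
        (support_convolution_subset _).trans (add_subset_add hf hf')
    _ = closedBall 0 (2 * ε) := by rw [closedBall_add_closedBall hε hε, add_zero, two_mul]

theorem exists_contDiff_tsupport_subset_fourier_ne_zero (ξ₀ : V) {ε : ℝ} (hε : 0 < ε) :
    ∃ ψ : V → ℂ, ContDiff ℝ ∞ ψ ∧ tsupport ψ ⊆ closedBall 0 ε ∧ 𝓕 ψ ξ₀ ≠ 0 := by
  let g : ContDiffBump (0 : V) := ⟨ε / 2, ε, half_pos hε, half_lt_self hε⟩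
  refine ⟨fun x => 𝐞 ⟪x, ξ₀⟫ • (g x : ℂ), ?_, ?_, ?_⟩
  · simp only [Circle.smul_def, smul_eq_mul]
    exact (Real.contDiff_fourierChar_inner ξ₀).mul (Complex.ofRealCLM.contDiff.comp g.contDiff)
  · refine (tsupport_smul_subset_right _ _).trans ?_
    exact (tsupport_comp_subset Complex.ofReal_zero g).trans g.tsupport_eq.subset
  · rw [Real.fourier_fourierChar_smul, sub_self, Real.fourier_eq]
    simp only [inner_zero_right, neg_zero, AddChar.map_zero_eq_one, one_smul]
    rw [integral_complex_ofReal, Ne, Complex.ofReal_eq_zero]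
    exact g.integral_pos.ne'

/-- A non-zero positive temperate measure on ℝⁿ has 0 in the support of its
Fourier transform: the distribution `μ̂ : φ ↦ ∫ 𝓕φ dμ` does not vanish on any
neighborhood of the origin. -/
theorem stmt2 (n : ℕ) (μ : Measure (EuclideanSpace ℝ (Fin n)))
    (hμ : μ ≠ 0) (htemp : μ.HasTemperateGrowth) (r : ℝ) (hr : 0 < r) :
    ∃ φ : SchwartzMap (EuclideanSpace ℝ (Fin n)) ℂ,
      tsupport (φ : EuclideanSpace ℝ (Fin n) → ℂ) ⊆ Metric.ball 0 r ∧
      ∫ x, (SchwartzMap.fourierTransformCLM ℂ φ) x ∂μ ≠ 0 := by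
  obtain ⟨ξ₀, hξ₀⟩ := Measure.nonempty_support hμ
  obtain ⟨ψ, hψ, hψsupp, hψξ₀⟩ :=
    exists_contDiff_tsupport_subset_fourier_ne_zero ξ₀ (by positivity : 0 < r / 3)
  have hψc : HasCompactSupport ψ :=
    (isCompact_closedBall _ _).of_isClosed_subset (isClosed_tsupport ψ) hψsupp
  have hψi : Integrable ψ := hψ.continuous.integrable_of_hasCompactSupport hψc
  have hΦsupp : tsupport (autocorrelation ψ) ⊆ closedBall 0 (2 * (r / 3)) :=
    tsupport_autocorrelation_subset (by positivity) ((subset_tsupport ψ).trans hψsupp)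
  have hΦc : HasCompactSupport (autocorrelation ψ) :=
    (isCompact_closedBall _ _).of_isClosed_subset (isClosed_tsupport _) hΦsupp
  let φ := hΦc.toSchwartzMap (hψ.autocorrelation hψc)
  have hφ (ξ) : SchwartzMap.fourierTransformCLM ℂ φ ξ = ((‖𝓕 ψ ξ‖ ^ 2 : ℝ) : ℂ) :=
    fourier_autocorrelation hψi ξ
  have hint : Integrable (fun ξ => ‖𝓕 ψ ξ‖ ^ 2) μ := by
    refine ((SchwartzMap.fourierTransformCLM ℂ φ).integrable (μ := μ)).norm.congr
      (.of_forall fun ξ => ?_)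
    simp only [hφ, Complex.norm_real, Real.norm_of_nonneg (sq_nonneg _)]
  refine ⟨φ, hΦsupp.trans (closedBall_subset_ball (by linarith)), ?_⟩
  simp_rw [hφ, integral_complex_ofReal, Ne, Complex.ofReal_eq_zero]
  exact (integral_pos_of_mem_support hξ₀ ((Real.continuous_fourier hψi).norm.pow 2) hint
    (fun _ => sq_nonneg _) (by simpa using hψξ₀)).ne'
end

section
/- Let E be a bounded subset of ℝ^m and ξ ∈ E−E a vector with |ξ|² > (diam E)² − δ² for some δ > 0. If ξ = y₁−x₁ = y₂−x₂ with x₁,y₁,x₂,y₂ ∈ E, then |x₁−x₂| < δ. -/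
open Metric Set Pointwise

/-- If `E ⊆ ℝᵐ` is bounded, `ξ ∈ E - E` satisfies
`|ξ|² > (diam E)² - δ²`, and `ξ = y₁ - x₁ = y₂ - x₂` with `x₁,y₁,x₂,y₂ ∈ E`, then
`|x₁ - x₂| < δ`. -/
theorem stmt10 (m : ℕ) (E : Set (EuclideanSpace ℝ (Fin m)))
    (hE : Bornology.IsBounded E) (δ : ℝ) (hδ : 0 < δ)
    (ξ x₁ y₁ x₂ y₂ : EuclideanSpace ℝ (Fin m))
    (hx₁ : x₁ ∈ E) (hy₁ : y₁ ∈ E) (hx₂ : x₂ ∈ E) (hy₂ : y₂ ∈ E)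
    (h1 : ξ = y₁ - x₁) (h2 : ξ = y₂ - x₂)
    (hξ : (Metric.diam E) ^ 2 - δ ^ 2 < ‖ξ‖ ^ 2) :
    ‖x₁ - x₂‖ < δ := by
  have hpar := parallelogram_law_with_norm ℝ ξ (x₁ - x₂)
  have e1 : ξ + (x₁ - x₂) = y₁ - x₂ := by rw [h1]; abel
  have e2 : ξ - (x₁ - x₂) = y₂ - x₁ := by rw [h2]; abel
  rw [e1, e2] at hpar
  have d1 : ‖y₁ - x₂‖ ≤ Metric.diam E := by
    have := Metric.dist_le_diam_of_mem hE hy₁ hx₂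
    rwa [dist_eq_norm] at this
  have d2 : ‖y₂ - x₁‖ ≤ Metric.diam E := by
    have := Metric.dist_le_diam_of_mem hE hy₂ hx₁
    rwa [dist_eq_norm] at this
  have hn1 : (0:ℝ) ≤ ‖y₁ - x₂‖ := norm_nonneg _
  have hn2 : (0:ℝ) ≤ ‖y₂ - x₁‖ := norm_nonneg _
  nlinarith [norm_nonneg (x₁ - x₂), norm_nonneg ξ]
end

section
/- Let Λ ⊂ ℝⁿ be uniformly discrete, and for each h ∈ Λ−Λ let Λ_h := Λ ∩ (Λ−h). Suppose there is c > 0 with D_#(Λ_h) > c for every h ∈ Λ−Λ. Then D⁺(Λ−Λ) < ∞. -/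
open MeasureTheory Filter Metric Set Pointwise
open scoped ENNReal

namespace Stmt11Aux

variable {n : ℕ}

local notation "E" => EuclideanSpace ℝ (Fin n)

noncomputable def v (n : ℕ) (r : ℝ) : ℝ :=
  (volume (ball (0 : EuclideanSpace ℝ (Fin n)) r)).toReal

lemma vol_ne_top (r : ℝ) : volume (ball (0 : E) r) ≠ ⊤ := measure_ball_lt_top.ne

lemma v_pos {r : ℝ} (hr : 0 < r) : 0 < v n r :=
  ENNReal.toReal_pos (measure_ball_pos _ _ hr).ne' (vol_ne_top r)

lemma v_nonneg (r : ℝ) : 0 ≤ v n r := ENNReal.toReal_nonneg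

lemma v_eq {r : ℝ} (hr : 0 < r) : v n r = r ^ n * v n 1 := by
  unfold v
  rw [Measure.addHaar_ball_of_pos volume (0 : E) hr, ENNReal.toReal_mul,
    ENNReal.toReal_ofReal (by positivity), finrank_euclideanSpace_fin]

lemma v_le {r s : ℝ} (hr : 0 < r) (hrs : r ≤ s) : v n r ≤ v n s := by
  rw [v_eq hr, v_eq (lt_of_lt_of_le hr hrs)]
  have : r ^ n ≤ s ^ n := pow_le_pow_left₀ hr.le hrs n
  nlinarith [v_nonneg (n := n) 1]

lemma v_double {r : ℝ} (hr : 0 < r) : v n (2 * r) = 2 ^ n * v n r := by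
  rw [v_eq hr, v_eq (by linarith : (0:ℝ) < 2 * r), mul_pow]
  ring

/-- Packing bound: a finite `d`-separated set inside `ball z R`. -/
lemma pack {d : ℝ} (hd : 0 < d) {Λ : Set E}
    (hsep : ∀ x ∈ Λ, ∀ y ∈ Λ, x ≠ y → d ≤ dist x y)
    (z : E) (R : ℝ) (T : Finset E) (hTΛ : ↑T ⊆ Λ) (hTb : ↑T ⊆ ball z R) :
    (T.card : ℝ) * v n (d / 2) ≤ v n (R + d / 2) := by
  have hdisj : (↑T : Set E).PairwiseDisjoint (fun p => ball p (d / 2)) := by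
    intro p hp q hq hpq
    exact ball_disjoint_ball (by
      have := hsep p (hTΛ hp) q (hTΛ hq) hpq
      linarith)
  have hmeas := measure_biUnion_finset (μ := volume) hdisj (fun p _ => measurableSet_ball)
  have hsub : (⋃ p ∈ T, ball p (d / 2)) ⊆ ball z (R + d / 2) := by
    intro y hy
    simp only [Set.mem_iUnion] at hy
    obtain ⟨p, hp, hyp⟩ := hy
    have hpz : dist p z < R := hTb hp
    have : dist y z ≤ dist y p + dist p z := dist_triangle _ _ _
    simp only [mem_ball] at hyp ⊢
    linarith
  have key : (T.card : ℝ≥0∞) * volume (ball (0 : E) (d / 2))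
      ≤ volume (ball (0 : E) (R + d / 2)) := by
    calc (T.card : ℝ≥0∞) * volume (ball (0 : E) (d / 2))
        = ∑ p ∈ T, volume (ball p (d / 2)) := by
          rw [Finset.sum_congr rfl fun p _ => Measure.addHaar_ball_center volume p (d / 2)]
          simp [mul_comm]
      _ = volume (⋃ p ∈ T, ball p (d / 2)) := hmeas.symm
      _ ≤ volume (ball z (R + d / 2)) := measure_mono hsub
      _ = volume (ball (0 : E) (R + d / 2)) := Measure.addHaar_ball_center volume z _
  have := ENNReal.toReal_mono (vol_ne_top (R + d / 2)) key
  rwa [ENNReal.toReal_mul, ENNReal.toReal_natCast] at this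

/-- A uniformly discrete set intersected with a ball is finite. -/
lemma sep_finite {d : ℝ} (hd : 0 < d) {Λ : Set E}
    (hsep : ∀ x ∈ Λ, ∀ y ∈ Λ, x ≠ y → d ≤ dist x y)
    (z : E) (R : ℝ) : (Λ ∩ ball z R).Finite := by
  by_contra hinf
  replace hinf : (Λ ∩ ball z R).Infinite := hinf
  obtain ⟨T, hTsub, hTfin, hTcard⟩ := Set.Infinite.exists_subset_ncard_eq hinf
    (⌈v n (R + d / 2) / v n (d / 2)⌉₊ + 1)
  have hw : 0 < v n (d / 2) := v_pos (by linarith)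
  have hpk := pack hd hsep z R hTfin.toFinset
    (by rw [Set.Finite.coe_toFinset]; exact hTsub.trans Set.inter_subset_left)
    (by rw [Set.Finite.coe_toFinset]; exact hTsub.trans Set.inter_subset_right)
  rw [Set.ncard_eq_toFinset_card T hTfin] at hTcard
  rw [hTcard] at hpk
  have hceil : v n (R + d / 2) / v n (d / 2) ≤ (⌈v n (R + d / 2) / v n (d / 2)⌉₊ : ℝ) :=
    Nat.le_ceil _
  have : ((⌈v n (R + d / 2) / v n (d / 2)⌉₊ + 1 : ℕ) : ℝ)
      ≤ v n (R + d / 2) / v n (d / 2) := by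
    rw [le_div_iff₀ hw]; exact hpk
  push_cast at this
  linarith

lemma main_bound {d : ℝ} (hd : 0 < d) {Λ : Set E}
    (hsep : ∀ x ∈ Λ, ∀ y ∈ Λ, x ≠ y → d ≤ dist x y)
    {c : ℝ} (hc : 0 < c)
    (h : ∀ h ∈ Λ - Λ, c < liminf (fun R : ℝ =>
        (((Λ ∩ {x | x + h ∈ Λ}) ∩ ball 0 R).ncard : ℝ) /
          (volume (ball (0 : E) R)).toReal) atTop)
    {R : ℝ} (hR : d / 2 ≤ R) (hR0 : 0 < R) (x : E) :
    (((Λ - Λ) ∩ ball x R).ncard : ℝ) ≤ 4 ^ n / (c * v n (d / 2) ^ 2) * v n R := by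
  classical
  have hw : 0 < v n (d / 2) := v_pos (by linarith)
  have hvR : 0 < v n R := v_pos hR0
  by_cases hfin : ((Λ - Λ) ∩ ball x R).Finite
  swap
  · rw [Set.Infinite.ncard hfin]
    push_cast
    positivity
  set F := hfin.toFinset with hF
  have hFmem : ∀ h0 ∈ F, h0 ∈ (Λ - Λ) ∩ ball x R := fun h0 hh0 => hfin.mem_toFinset.mp hh0
  -- eventual facts about R'
  have hev : ∀ᶠ R' in (atTop : Filter ℝ), ((d / 2 ≤ R' ∧ 1 ≤ R') ∧
      ∀ h0 ∈ F, c * v n R' < (((Λ ∩ {p | p + h0 ∈ Λ}) ∩ ball 0 R').ncard : ℝ)) := by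
    refine ((eventually_ge_atTop (d / 2)).and (eventually_ge_atTop 1)).and ?_
    rw [Filter.eventually_all_finset]
    intro h0 hh0
    have hlim := h h0 (hFmem h0 hh0).1
    have hcb : IsBoundedUnder (· ≥ ·) atTop (fun R' : ℝ =>
        (((Λ ∩ {p | p + h0 ∈ Λ}) ∩ ball 0 R').ncard : ℝ) /
          (volume (ball (0 : E) R')).toReal) :=
      Filter.isBoundedUnder_of ⟨0, fun R' =>
        div_nonneg (Nat.cast_nonneg _) ENNReal.toReal_nonneg⟩
    have hevlt := eventually_lt_of_lt_liminf hlim hcb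
    filter_upwards [hevlt, eventually_gt_atTop (0 : ℝ)] with R' h1 h2
    exact (lt_div_iff₀ (v_pos h2)).mp h1
  obtain ⟨R', ⟨⟨hR'd, hR'1⟩, hcount⟩⟩ := hev.exists
  have hR'0 : (0 : ℝ) < R' := by linarith
  have hvR' : 0 < v n R' := v_pos hR'0
  have hLfin := sep_finite hd hsep (0 : E) R'
  set L := hLfin.toFinset with hL
  have hsetid : ∀ h0 : E, ((Λ ∩ {p | p + h0 ∈ Λ}) ∩ ball 0 R')
      = ↑(L.filter fun p => p + h0 ∈ Λ) := by
    intro h0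
    ext p
    simp only [Finset.coe_filter, Set.mem_setOf_eq, hL, Set.Finite.mem_toFinset,
      Set.mem_inter_iff, mem_ball]
    tauto
  have hsum1 : (F.card : ℝ) * (c * v n R')
      ≤ ∑ h0 ∈ F, ((L.filter fun p => p + h0 ∈ Λ).card : ℝ) := by
    have hterm : ∀ h0 ∈ F, c * v n R' ≤ ((L.filter fun p => p + h0 ∈ Λ).card : ℝ) := by
      intro h0 hh0
      have h' := hcount h0 hh0
      rw [hsetid h0, Set.ncard_coe_finset] at h'
      exact h'.le
    calc (F.card : ℝ) * (c * v n R') = ∑ _h0 ∈ F, (c * v n R') := by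
          rw [Finset.sum_const, nsmul_eq_mul]
      _ ≤ _ := Finset.sum_le_sum hterm
  have hsum2 : ∑ h0 ∈ F, ((L.filter fun p => p + h0 ∈ Λ).card : ℝ)
      = ∑ p ∈ L, ((F.filter fun h0 => p + h0 ∈ Λ).card : ℝ) := by
    simp only [Finset.card_filter]
    push_cast
    rw [Finset.sum_comm]
  have hfiber : ∀ p ∈ L, ((F.filter fun h0 => p + h0 ∈ Λ).card : ℝ) * v n (d / 2)
      ≤ v n (R + d / 2) := by
    intro p _hp
    have hinj : Set.InjOn (fun h0 => p + h0) ↑(F.filter fun h0 => p + h0 ∈ Λ) :=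
      fun a _ b _ hab => by simpa using hab
    have hcard : ((F.filter fun h0 => p + h0 ∈ Λ).image (fun h0 => p + h0)).card
        = (F.filter fun h0 => p + h0 ∈ Λ).card := Finset.card_image_of_injOn hinj
    have hpk := pack hd hsep (p + x) R
      ((F.filter fun h0 => p + h0 ∈ Λ).image (fun h0 => p + h0)) ?_ ?_
    · rwa [hcard] at hpk
    · intro q hq
      simp only [Finset.coe_image, Set.mem_image, Finset.mem_coe, Finset.mem_filter] at hq
      obtain ⟨h0, ⟨_, hh0Λ⟩, rfl⟩ := hq
      exact hh0Λ
    · intro q hq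
      simp only [Finset.coe_image, Set.mem_image, Finset.mem_coe, Finset.mem_filter] at hq
      obtain ⟨h0, ⟨hh0F, _⟩, rfl⟩ := hq
      have hball : dist h0 x < R := (hFmem h0 hh0F).2
      simpa [mem_ball, dist_add_left] using hball
  have hsum3 : (∑ p ∈ L, ((F.filter fun h0 => p + h0 ∈ Λ).card : ℝ)) * v n (d / 2)
      ≤ (L.card : ℝ) * v n (R + d / 2) := by
    rw [Finset.sum_mul]
    calc ∑ p ∈ L, ((F.filter fun h0 => p + h0 ∈ Λ).card : ℝ) * v n (d / 2)
        ≤ ∑ _p ∈ L, v n (R + d / 2) := Finset.sum_le_sum hfiber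
      _ = (L.card : ℝ) * v n (R + d / 2) := by rw [Finset.sum_const, nsmul_eq_mul]
  have hL2 : (L.card : ℝ) * v n (d / 2) ≤ v n (R' + d / 2) := pack hd hsep 0 R' L
    (by rw [hL, Set.Finite.coe_toFinset]; exact Set.inter_subset_left)
    (by rw [hL, Set.Finite.coe_toFinset]; exact Set.inter_subset_right)
  have hvR'2 : v n (R' + d / 2) ≤ 2 ^ n * v n R' := by
    have := v_le (n := n) (show (0:ℝ) < R' + d / 2 by linarith) (show R' + d / 2 ≤ 2 * R' by linarith)
    rwa [v_double hR'0] at this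
  have hvR2 : v n (R + d / 2) ≤ 2 ^ n * v n R := by
    have := v_le (n := n) (show (0:ℝ) < R + d / 2 by linarith) (show R + d / 2 ≤ 2 * R by linarith)
    rwa [v_double hR0] at this
  -- combine everything
  have hA : 0 ≤ v n (R + d / 2) := v_nonneg _
  have step1 : (F.card : ℝ) * (c * v n R') * v n (d / 2)
      ≤ (L.card : ℝ) * v n (R + d / 2) := by
    calc (F.card : ℝ) * (c * v n R') * v n (d / 2)
        ≤ (∑ p ∈ L, ((F.filter fun h0 => p + h0 ∈ Λ).card : ℝ)) * v n (d / 2) := by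
          rw [← hsum2]
          exact mul_le_mul_of_nonneg_right hsum1 hw.le
      _ ≤ _ := hsum3
  have step2 : (F.card : ℝ) * (c * v n R') * v n (d / 2) * v n (d / 2)
      ≤ (2 ^ n * v n R') * (2 ^ n * v n R) := by
    calc (F.card : ℝ) * (c * v n R') * v n (d / 2) * v n (d / 2)
        ≤ ((L.card : ℝ) * v n (R + d / 2)) * v n (d / 2) :=
          mul_le_mul_of_nonneg_right step1 hw.le
      _ = ((L.card : ℝ) * v n (d / 2)) * v n (R + d / 2) := by ring
      _ ≤ v n (R' + d / 2) * v n (R + d / 2) := mul_le_mul_of_nonneg_right hL2 hA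
      _ ≤ (2 ^ n * v n R') * (2 ^ n * v n R) :=
          mul_le_mul hvR'2 hvR2 hA (by positivity)
  have hmain : (F.card : ℝ) * (c * v n (d / 2) ^ 2) ≤ 4 ^ n * v n R := by
    refine le_of_mul_le_mul_right ?_ hvR'
    have h4 : (4 : ℝ) ^ n = 2 ^ n * 2 ^ n := by
      rw [← mul_pow]; norm_num
    calc (F.card : ℝ) * (c * v n (d / 2) ^ 2) * v n R'
        = (F.card : ℝ) * (c * v n R') * v n (d / 2) * v n (d / 2) := by ring
      _ ≤ (2 ^ n * v n R') * (2 ^ n * v n R) := step2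
      _ = 4 ^ n * v n R * v n R' := by rw [h4]; ring
  have hcardeq : ((Λ - Λ) ∩ ball x R).ncard = F.card :=
    Set.ncard_eq_toFinset_card _ hfin
  rw [hcardeq, div_mul_eq_mul_div, le_div_iff₀ (by positivity)]
  calc (F.card : ℝ) * (c * v n (d / 2) ^ 2) ≤ 4 ^ n * v n R := hmain
    _ = 4 ^ n * v n R := rfl
  
end Stmt11Aux

/-- Let `Λ ⊆ ℝⁿ` be uniformly discrete and suppose there is `c > 0` with
`D_#(Λ_h) > c` for every `h ∈ Λ - Λ`, where `Λ_h = Λ ∩ (Λ - h)`. Then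
`D⁺(Λ - Λ) < ∞`. -/
theorem stmt11 (n : ℕ) (Λ : Set (EuclideanSpace ℝ (Fin n)))
    (hud : ∃ d > 0, ∀ x ∈ Λ, ∀ y ∈ Λ, x ≠ y → d ≤ dist x y)
    (c : ℝ) (hc : 0 < c)
    (h : ∀ h ∈ Λ - Λ, c < liminf (fun R : ℝ =>
        (((Λ ∩ {x | x + h ∈ Λ}) ∩ Metric.ball 0 R).ncard : ℝ) /
          (volume (Metric.ball (0 : EuclideanSpace ℝ (Fin n)) R)).toReal) atTop) :
    limsup (fun R : ℝ => ⨆ x : EuclideanSpace ℝ (Fin n),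
        (((Λ - Λ) ∩ Metric.ball x R).ncard : ℝ≥0∞) /
          volume (Metric.ball (0 : EuclideanSpace ℝ (Fin n)) R)) atTop < ⊤ := by
  obtain ⟨d, hd, hsep⟩ := hud
  have hw : 0 < Stmt11Aux.v n (d / 2) := Stmt11Aux.v_pos (by linarith)
  set C : ℝ := 4 ^ n / (c * Stmt11Aux.v n (d / 2) ^ 2) with hC
  have hC0 : 0 ≤ C := by positivity
  have hev : ∀ᶠ R in (atTop : Filter ℝ), (⨆ x : EuclideanSpace ℝ (Fin n),
      (((Λ - Λ) ∩ Metric.ball x R).ncard : ℝ≥0∞) /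
        volume (Metric.ball (0 : EuclideanSpace ℝ (Fin n)) R)) ≤ ENNReal.ofReal C := by
    filter_upwards [eventually_ge_atTop (d / 2), eventually_gt_atTop (0 : ℝ)] with R hR1 hR0
    refine iSup_le fun x => ?_
    have hb := Stmt11Aux.main_bound hd hsep hc h hR1 hR0 x
    refine ENNReal.div_le_of_le_mul ?_
    have hcast : (((Λ - Λ) ∩ Metric.ball x R).ncard : ℝ≥0∞)
        = ENNReal.ofReal ((((Λ - Λ) ∩ Metric.ball x R).ncard : ℕ) : ℝ) :=
      (ENNReal.ofReal_natCast _).symm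
    rw [hcast]
    calc ENNReal.ofReal ((((Λ - Λ) ∩ Metric.ball x R).ncard : ℕ) : ℝ)
        ≤ ENNReal.ofReal (C * Stmt11Aux.v n R) := ENNReal.ofReal_le_ofReal hb
      _ = ENNReal.ofReal C * ENNReal.ofReal (Stmt11Aux.v n R) := ENNReal.ofReal_mul hC0
      _ = ENNReal.ofReal C * volume (Metric.ball (0 : EuclideanSpace ℝ (Fin n)) R) := by
          rw [Stmt11Aux.v, ENNReal.ofReal_toReal (Stmt11Aux.vol_ne_top R)]
  have hle : limsup (fun R : ℝ => ⨆ x : EuclideanSpace ℝ (Fin n),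
      (((Λ - Λ) ∩ Metric.ball x R).ncard : ℝ≥0∞) /
        volume (Metric.ball (0 : EuclideanSpace ℝ (Fin n)) R)) atTop ≤ ENNReal.ofReal C :=
    limsup_le_of_le (by isBoundedDefault) hev
  exact lt_of_le_of_lt hle ENNReal.ofReal_lt_top
end

section
/- Let θ₁,…,θ_s ∈ ℝⁿ ∖ ℚⁿ. Then there exists m ∈ ℤⁿ such that ⟨θ_j, m⟩ ∉ ℤ for all j = 1,…,s. -/
open Set Polynomial

lemma coeff_rat (p : Polynomial ℝ) (S : Finset ℤ) (hd : p.degree < S.card)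
    (hv : ∀ t ∈ S, ∃ q : ℚ, p.eval (t : ℝ) = q) :
    ∀ i, ∃ q : ℚ, p.coeff i = q := by
  have hv' : ∀ t : ℤ, ∃ q : ℚ, t ∈ S → p.eval (t : ℝ) = q := by
    intro t
    by_cases h : t ∈ S
    · obtain ⟨q, hq⟩ := hv t h
      exact ⟨q, fun _ => hq⟩
    · exact ⟨0, fun h' => absurd h' h⟩
  choose y hy using hv'
  have hinjQ : Set.InjOn (fun t : ℤ => (t : ℚ)) S := fun a _ b _ h => Int.cast_injective h
  have hinjR : Set.InjOn (fun t : ℤ => (t : ℝ)) S := fun a _ b _ h => Int.cast_injective h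
  set q : Polynomial ℚ := Lagrange.interpolate S (fun t : ℤ => (t : ℚ)) y with hqdef
  have hdq : q.degree < S.card := Lagrange.degree_interpolate_lt _ hinjQ
  have φ : ℚ →+* ℝ := algebraMap ℚ ℝ
  have hpmap : p = q.map (algebraMap ℚ ℝ) := by
    apply Polynomial.eq_of_degrees_lt_of_eval_index_eq S hinjR hd
    · rw [Polynomial.degree_map]
      exact hdq
    · intro t ht
      rw [hy t ht, show ((t : ℤ) : ℝ) = algebraMap ℚ ℝ ((t : ℤ) : ℚ) by simp,
        Polynomial.eval_map, Polynomial.eval₂_at_apply, hqdef,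
        Lagrange.eval_interpolate_at_node _ hinjQ ht]
      exact (eq_ratCast _ _).symm
  intro i
  refine ⟨q.coeff i, ?_⟩
  rw [hpmap, Polynomial.coeff_map]
  simp

lemma key (n : ℕ) (a : Fin n → ℝ) (i0 : Fin n) (ha : Irrational (a i0))
    (S : Finset ℤ) (hcard : S.card = n + 1)
    (hv : ∀ t ∈ S, ∃ k : ℤ, (∑ i, a i * (t : ℝ) ^ ((i : ℕ) + 1)) = (k : ℝ)) :
    False := by
  set p : Polynomial ℝ := ∑ i, Polynomial.C (a i) * Polynomial.X ^ ((i : ℕ) + 1) with hp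
  have hdeg : p.degree < S.card := by
    rw [hcard]
    apply lt_of_le_of_lt (Polynomial.degree_sum_le _ _)
    rw [Finset.sup_lt_iff (by exact_mod_cast WithBot.bot_lt_coe (n+1))]
    intro i _
    apply lt_of_le_of_lt (Polynomial.degree_C_mul_X_pow_le _ _)
    exact_mod_cast Nat.succ_lt_succ i.2
  have heval : ∀ t : ℤ, p.eval (t : ℝ) = ∑ i, a i * (t : ℝ) ^ ((i : ℕ) + 1) := by
    intro t
    rw [hp, Polynomial.eval_finset_sum]
    simp
  have hrat := coeff_rat p S hdeg (by
    intro t ht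
    obtain ⟨k, hk⟩ := hv t ht
    exact ⟨(k : ℚ), by rw [heval, hk]; simp⟩)
  obtain ⟨q, hq⟩ := hrat ((i0 : ℕ) + 1)
  apply ha
  refine ⟨q, ?_⟩
  rw [← hq, hp]
  rw [Polynomial.finset_sum_coeff]
  simp only [Polynomial.coeff_C_mul, Polynomial.coeff_X_pow]
  rw [Finset.sum_eq_single i0]
  · simp
  · intro b _ hb
    have hne : ¬ ((i0 : ℕ) + 1 = (b : ℕ) + 1) :=
      fun h => hb (Fin.ext (Nat.succ_injective h)).symm
    rw [if_neg hne, mul_zero]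
  · intro h
    exact absurd (Finset.mem_univ i0) h

/-- Given `θ₁,…,θ_s ∈ ℝⁿ \ ℚⁿ`, there is `m ∈ ℤⁿ` with `⟨θ_j, m⟩ ∉ ℤ`
for all `j`. -/
theorem stmt14 (n s : ℕ) (θ : Fin s → Fin n → ℝ)
    (hθ : ∀ j, ∃ i, Irrational (θ j i)) :
    ∃ m : Fin n → ℤ, ∀ j, ∀ k : ℤ, (∑ i, θ j i * (m i : ℝ)) ≠ (k : ℝ) := by
  classical
  set cand : Finset ℤ := (Finset.range (s * n + 1)).image (Nat.cast : ℕ → ℤ) with hcand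
  have hcandcard : cand.card = s * n + 1 := by
    rw [hcand, Finset.card_image_of_injective _ (fun a b h => by exact_mod_cast h),
      Finset.card_range]
  set Bad : Fin s → Finset ℤ := fun j =>
    cand.filter (fun t => ∃ k : ℤ, (∑ i, θ j i * (t : ℝ) ^ ((i : ℕ) + 1)) = (k : ℝ)) with hBad
  have hBadcard : ∀ j, (Bad j).card ≤ n := by
    intro j
    by_contra h
    push_neg at h
    obtain ⟨S, hS, hScard⟩ := Finset.exists_subset_card_eq (show n + 1 ≤ (Bad j).card from h)
    obtain ⟨i0, hi0⟩ := hθ j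
    apply key n (θ j) i0 hi0 S hScard
    intro t ht
    have := hS ht
    rw [hBad, Finset.mem_filter] at this
    exact this.2
  have hcover : (Finset.univ.biUnion Bad).card < cand.card := by
    calc (Finset.univ.biUnion Bad).card ≤ ∑ j : Fin s, (Bad j).card :=
          Finset.card_biUnion_le
      _ ≤ ∑ _j : Fin s, n := Finset.sum_le_sum (fun j _ => hBadcard j)
      _ = s * n := by simp [Finset.sum_const, mul_comm]
      _ < s * n + 1 := Nat.lt_succ_self _
      _ = cand.card := hcandcard.symm
  have : ¬ cand ⊆ Finset.univ.biUnion Bad := fun h =>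
    absurd (Finset.card_le_card h) (not_le.mpr hcover)
  obtain ⟨t, htc, htb⟩ := Finset.not_subset.mp this
  refine ⟨fun i => t ^ ((i : ℕ) + 1), ?_⟩
  intro j k hk
  apply htb
  rw [Finset.mem_biUnion]
  refine ⟨j, Finset.mem_univ _, ?_⟩
  rw [hBad, Finset.mem_filter]
  refine ⟨htc, k, ?_⟩
  rw [← hk]
  push_cast
  ring
end

section
/- Let L be a full-rank lattice in ℝⁿ and F a finite subset of ℝⁿ. Then there exist another full-rank lattice L' and a finite set F' such that L+F ⊂ L'+F', L' ∩ ℤ[F'] = {0}, and L ⊂ L', where ℤ[F'] is the additive group generated by F'. -/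
open Set Pointwise

/-- A full-rank lattice in ℝⁿ: the image of ℤⁿ under an invertible linear map. -/
def IsFullLattice (n : ℕ) (L : Set (Fin n → ℝ)) : Prop :=
  ∃ T : (Fin n → ℝ) ≃ₗ[ℝ] (Fin n → ℝ),
    L = Set.range (fun m : Fin n → ℤ => T (fun i => (m i : ℝ)))

/-!
The group `M` generated by `L ∪ F` is a finitely generated torsion-free abelian group, hence free,
and `L` is a subgroup of rank `n`. A Smith normal form basis of `M` adapted to `L` splits `M` as
`L' ⊕ Q`, where `L'` is spanned by `n` basis vectors and contains `L`; these `n` vectors span `ℝⁿ`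
over `ℝ`, so `L'` is a full-rank lattice. Taking for `F'` the `Q`-components of the points of `F`
gives `F ⊆ L' + F'` and `ℤ[F'] ⊆ Q`, which meets `L'` only in `0`.
-/

open Submodule

theorem range_map_intCast_eq_span {n : ℕ} {V : Type*} [AddCommGroup V] [Module ℝ V]
    (T : (Fin n → ℝ) ≃ₗ[ℝ] V) :
    range (fun m : Fin n → ℤ => T (fun i => (m i : ℝ))) =
      span ℤ (range ((Pi.basisFun ℝ (Fin n)).map T)) := by
  have hT (m : Fin n → ℤ) :
      T (fun i => (m i : ℝ)) = ∑ i, m i • (Pi.basisFun ℝ (Fin n)).map T i := by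
    simp_rw [Module.Basis.map_apply, ← Int.cast_smul_eq_zsmul ℝ, ← map_smul, ← map_sum]
    congr 1
    simpa using ((Pi.basisFun ℝ (Fin n)).sum_repr fun i => (m i : ℝ)).symm
  ext x
  simp only [mem_range, SetLike.mem_coe, mem_span_range_iff_exists_fun, hT, eq_comm]

theorem isFullLattice_iff {n : ℕ} {L : Set (Fin n → ℝ)} :
    IsFullLattice n L ↔ ∃ b : Module.Basis (Fin n) ℝ (Fin n → ℝ), L = span ℤ (range b) := by
  constructor
  · rintro ⟨T, rfl⟩
    exact ⟨_, range_map_intCast_eq_span T⟩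
  · rintro ⟨b, rfl⟩
    refine ⟨(Pi.basisFun ℝ (Fin n)).equiv b (Equiv.refl _), ?_⟩
    rw [range_map_intCast_eq_span, Module.Basis.map_equiv]
    simp

theorem isFullLattice_span_of_span_eq_top {n : ℕ} (e : Fin n → Fin n → ℝ)
    (he : span ℝ (range e) = ⊤) : IsFullLattice n (span ℤ (range e)) :=
  isFullLattice_iff.2 ⟨basisOfTopLeSpanOfCardEqFinrank e he.ge (by simp),
    by rw [coe_basisOfTopLeSpanOfCardEqFinrank]⟩

theorem Submodule.exists_le_span_isCompl {R M ι : Type*} [CommRing R] [IsDomain R]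
    [IsPrincipalIdealRing R] [AddCommGroup M] [Module R M] [Module.Free R M] [Module.Finite R M]
    [Fintype ι] (N : Submodule R M) (bN : Module.Basis ι R N) :
    ∃ (e : ι → M) (Q : Submodule R M), N ≤ span R (range e) ∧ IsCompl (span R (range e)) Q := by
  obtain ⟨k, snf⟩ := N.smithNormalForm (Module.Free.chooseBasis R M)
  have hrange : range (snf.bM ∘ snf.f ∘ bN.indexEquiv snf.bN) = snf.bM '' range snf.f := by
    rw [range_comp, (bN.indexEquiv snf.bN).surjective.range_comp]
  refine ⟨snf.bM ∘ snf.f ∘ bN.indexEquiv snf.bN, span R (snf.bM '' (range snf.f)ᶜ), ?_, ?_⟩ <;>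
    rw [hrange]
  · calc N = (span R (range snf.bN)).map N.subtype := by
          rw [snf.bN.span_eq, map_top, range_subtype]
      _ ≤ span R (snf.bM '' range snf.f) := by
          rw [map_span, span_le]
          rintro _ ⟨_, ⟨i, rfl⟩, rfl⟩
          rw [N.subtype_apply, snf.snf i]
          exact smul_mem _ _ (subset_span (mem_image_of_mem _ (mem_range_self i)))
  · exact snf.bM.linearIndependent.isCompl_span_image snf.bM.span_eq isCompl_compl

theorem Submodule.exists_le_span_disjoint_sup_eq_of_le {R V ι : Type*} [CommRing R] [IsDomain R]
    [IsPrincipalIdealRing R] [AddCommGroup V] [Module R V] [Fintype ι] {N M : Submodule R V}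
    [Module.Free R M] [Module.Finite R M] (hNM : N ≤ M) (bN : Module.Basis ι R N) :
    ∃ (e : ι → V) (Q : Submodule R V), N ≤ span R (range e) ∧
      Disjoint (span R (range e)) Q ∧ span R (range e) ⊔ Q = M := by
  obtain ⟨e, Q, hNe, hcompl⟩ := (N.comap M.subtype).exists_le_span_isCompl
    (bN.map (comapSubtypeEquivOfLe hNM).symm)
  refine ⟨M.subtype ∘ e, Q.map M.subtype, ?_, ?_, ?_⟩ <;> rw [range_comp, ← map_span]
  · simpa [← map_le_map_iff_of_injective M.injective_subtype, hNM] using hNe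
  · exact disjoint_map M.injective_subtype hcompl.disjoint
  · rw [← map_sup, hcompl.sup_eq_top, map_top, range_subtype]

theorem Set.exists_finite_subset_add_of_subset_add {G : Type*} [Add G] {A B F : Set G}
    (hF : F.Finite) (hFAB : F ⊆ A + B) : ∃ F' ⊆ B, F'.Finite ∧ F ⊆ A + F' := by
  choose! a ha b hb hab using fun x (hx : x ∈ F) => mem_add.1 (hFAB hx)
  exact ⟨b '' F, image_subset_iff.2 hb, hF.image b,
    fun x hx => mem_add.2 ⟨a x, ha x hx, b x, mem_image_of_mem b hx, hab x hx⟩⟩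

/-- Given a full-rank lattice `L ⊆ ℝⁿ` and a finite set `F`, there are a
full-rank lattice `L'` and a finite set `F'` with `L + F ⊆ L' + F'`,
`L' ∩ ℤ[F'] = {0}` and `L ⊆ L'`. -/
theorem stmt15 (n : ℕ) (L : Set (Fin n → ℝ)) (hL : IsFullLattice n L)
    (F : Set (Fin n → ℝ)) (hF : F.Finite) :
    ∃ (L' F' : Set (Fin n → ℝ)), IsFullLattice n L' ∧ F'.Finite ∧
      L + F ⊆ L' + F' ∧
      L' ∩ (AddSubgroup.closure F' : Set (Fin n → ℝ)) = {0} ∧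
      L ⊆ L' := by
  obtain ⟨b, rfl⟩ := isFullLattice_iff.1 hL
  set M := span ℤ (range b ∪ F)
  have : Module.Finite ℤ M := Module.Finite.span_of_finite ℤ ((finite_range b).union hF)
  obtain ⟨e, Q, hLe, hdisj, hsup⟩ :=
    exists_le_span_disjoint_sup_eq_of_le (N := span ℤ (range b)) (M := M)
      (span_mono subset_union_left) (.span (b.linearIndependent.restrict_scalars' ℤ))
  obtain ⟨F', hF'Q, hF', hFF'⟩ := exists_finite_subset_add_of_subset_add hF
    (subset_union_right.trans (subset_span.trans (hsup ▸ (coe_sup _ _).le)))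
  refine ⟨span ℤ (range e), F', isFullLattice_span_of_span_eq_top e ?_, hF', ?_, ?_, hLe⟩
  · refine eq_top_iff.2 (b.span_eq ▸ span_le.2 fun x hx => ?_)
    exact span_le_restrictScalars ℤ ℝ _ (hLe (subset_span hx))
  · calc (span ℤ (range b) : Set (Fin n → ℝ)) + F
        ⊆ span ℤ (range e) + (span ℤ (range e) + F') := add_subset_add hLe hFF'
      _ = span ℤ (range e) + F' := by rw [← add_assoc, ← coe_sup, sup_idem]
  · have hclosure : AddSubgroup.closure F' ≤ Q.toAddSubgroup := (AddSubgroup.closure_le _).2 hF'Q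
    refine eq_singleton_iff_unique_mem.2 ⟨⟨zero_mem _, zero_mem _⟩, fun x hx => ?_⟩
    exact disjoint_def.1 hdisj x hx.1 (hclosure hx.2)
end
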